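/- Let h = h_L ∘ ... ∘ h_1 where each h_l(x) = x + g_l(x) and each g_l : X → X is α-Lipschitz with 0 < α ≤ 1 on a normed space X. Then for all x, x' ∈ X: (1-α)^L ‖x - x'‖ ≤ ‖h(x) - h(x')‖ ≤ (1+α)^L ‖x - x'‖. -/

import Mathlib

/-- Composition of residual blocks `h_l(x) = x + g_l(x)`:
`resComp g 0 = id`, `resComp g (n+1) = h_{n+1} ∘ resComp g n`. -/
def resComp {X : Type*} [Add X] (g : ℕ → X → X) : ℕ → X → X
  | 0 => id
  | (n + 1) => fun x => resComp g n x + g n (resComp g n x)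

section ResidualBlock

variable {E : Type*} [SeminormedAddCommGroup E] {f : E → E} {α : ℝ}

theorem norm_add_apply_sub_add_apply_le (hf : ∀ a b : E, ‖f a - f b‖ ≤ α * ‖a - b‖) (a b : E) :
    ‖a + f a - (b + f b)‖ ≤ (1 + α) * ‖a - b‖ :=
  calc ‖a + f a - (b + f b)‖ = ‖(a - b) + (f a - f b)‖ := by rw [add_sub_add_comm]
    _ ≤ ‖a - b‖ + ‖f a - f b‖ := norm_add_le _ _
    _ ≤ (1 + α) * ‖a - b‖ := by linarith [hf a b]

theorem one_sub_mul_norm_sub_le_norm_add_apply_sub_add_apply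
    (hf : ∀ a b : E, ‖f a - f b‖ ≤ α * ‖a - b‖) (a b : E) :
    (1 - α) * ‖a - b‖ ≤ ‖a + f a - (b + f b)‖ := by
  have h : ‖a - b‖ ≤ ‖a + f a - (b + f b)‖ + ‖f a - f b‖ := by
    simpa only [add_sub_add_comm, add_sub_cancel_right] using
      norm_sub_le (a + f a - (b + f b)) (f a - f b)
  linarith [hf a b]

end ResidualBlock

section ResidualComposition

variable {E : Type*} [SeminormedAddCommGroup E] {g : ℕ → E → E} {α : ℝ}

theorem norm_resComp_sub_le (hα : 0 ≤ α) (L : ℕ)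
    (hg : ∀ l < L, ∀ x x' : E, ‖g l x - g l x'‖ ≤ α * ‖x - x'‖) (x x' : E) :
    ‖resComp g L x - resComp g L x'‖ ≤ (1 + α) ^ L * ‖x - x'‖ := by
  induction L with
  | zero => simp [resComp]
  | succ n ih =>
    have ih := ih fun l hl => hg l (hl.trans n.lt_succ_self)
    calc ‖resComp g (n + 1) x - resComp g (n + 1) x'‖
        ≤ (1 + α) * ‖resComp g n x - resComp g n x'‖ :=
          norm_add_apply_sub_add_apply_le (hg n n.lt_succ_self) _ _
      _ ≤ (1 + α) * ((1 + α) ^ n * ‖x - x'‖) := by gcongr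
      _ = (1 + α) ^ (n + 1) * ‖x - x'‖ := by ring

theorem one_sub_pow_mul_norm_sub_le_norm_resComp_sub (hα : α ≤ 1) (L : ℕ)
    (hg : ∀ l < L, ∀ x x' : E, ‖g l x - g l x'‖ ≤ α * ‖x - x'‖) (x x' : E) :
    (1 - α) ^ L * ‖x - x'‖ ≤ ‖resComp g L x - resComp g L x'‖ := by
  induction L with
  | zero => simp [resComp]
  | succ n ih =>
    have ih := ih fun l hl => hg l (hl.trans n.lt_succ_self)
    calc (1 - α) ^ (n + 1) * ‖x - x'‖ = (1 - α) * ((1 - α) ^ n * ‖x - x'‖) := by ring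
      _ ≤ (1 - α) * ‖resComp g n x - resComp g n x'‖ := by gcongr
      _ ≤ ‖resComp g (n + 1) x - resComp g (n + 1) x'‖ :=
          one_sub_mul_norm_sub_le_norm_add_apply_sub_add_apply (hg n n.lt_succ_self) _ _

end ResidualComposition

theorem residual_bi_lipschitz_general {X : Type*} [NormedAddCommGroup X]
    (g : ℕ → X → X) (α : ℝ) (hα0 : 0 < α) (hα1 : α ≤ 1) (L : ℕ)
    (hg : ∀ l < L, ∀ x x' : X, ‖g l x - g l x'‖ ≤ α * ‖x - x'‖) :
    ∀ x x' : X,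
      (1 - α) ^ L * ‖x - x'‖ ≤ ‖resComp g L x - resComp g L x'‖ ∧
      ‖resComp g L x - resComp g L x'‖ ≤ (1 + α) ^ L * ‖x - x'‖ := fun x x' =>
  ⟨one_sub_pow_mul_norm_sub_le_norm_resComp_sub hα1 L hg x x',
    norm_resComp_sub_le hα0.le L hg x x'⟩

theorem residual_bi_lipschitz {X : Type*} [NormedAddCommGroup X] [NormedSpace ℝ X]
    (g : ℕ → X → X) (α : ℝ) (hα0 : 0 < α) (hα1 : α ≤ 1) (L : ℕ)
    (hg : ∀ l < L, ∀ x x' : X, ‖g l x - g l x'‖ ≤ α * ‖x - x'‖) :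
    ∀ x x' : X,
      (1 - α) ^ L * ‖x - x'‖ ≤ ‖resComp g L x - resComp g L x'‖ ∧
      ‖resComp g L x - resComp g L x'‖ ≤ (1 + α) ^ L * ‖x - x'‖ :=
  residual_bi_lipschitz_general g α hα0 hα1 L hg
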